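/- Let V be a Hilbert space with bounded coercive bilinear form a (coercivity constant α, boundedness constant M), Q a Hilbert space, b : V × Q → ℝ bounded. Let (u, λ) ∈ V × Q solve the saddle point problem a(u,v) + b(v,λ) = F(v), b(u,μ) = 0, and let (u_h, λ_h) ∈ V_h × Q_h (finite-dimensional subspaces) solve the corresponding discrete problem satisfying a discrete inf-sup condition with constant β > 0. If additionally the discrete solution u_h satisfies b(u_h, μ) = 0 for all μ ∈ Q (not just Q_h), then ‖u - u_h‖_V ≤ C inf_{v ∈ V_h ∩ Ker b} ‖u - v‖_V with C = M/α, i.e., the error in the primal variable is independent of the multiplier approximation. -/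
import Mathlib


noncomputable section

/-- Bilinearity of a real-valued map of two variables. -/
def IsBilin {V W : Type*} [AddCommGroup V] [Module ℝ V] [AddCommGroup W] [Module ℝ W]
    (a : V → W → ℝ) : Prop :=
  (∀ u v w, a (u + v) w = a u w + a v w) ∧ (∀ (c : ℝ) u w, a (c • u) w = c * a u w) ∧
  (∀ u v w, a u (v + w) = a u v + a u w) ∧ (∀ (c : ℝ) u v, a u (c • v) = c * a u v)


lemma IsBilin.sub_left {V W : Type*} [AddCommGroup V] [Module ℝ V] [AddCommGroup W]
    [Module ℝ W] {a : V → W → ℝ} (h : IsBilin a) (u v : V) (w : W) :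
    a (u - v) w = a u w - a v w := by
  have h1 := h.1 u (-v) w
  have h2 := h.2.1 (-1 : ℝ) v w
  simp only [neg_one_smul] at h2
  rw [sub_eq_add_neg, h1, h2]; ring

lemma IsBilin.sub_right {V W : Type*} [AddCommGroup V] [Module ℝ V] [AddCommGroup W]
    [Module ℝ W] {a : V → W → ℝ} (h : IsBilin a) (u : V) (v w : W) :
    a u (v - w) = a u v - a u w := by
  have h1 := h.2.2.1 u v (-w)
  have h2 := h.2.2.2 (-1 : ℝ) u w
  simp only [neg_one_smul] at h2
  rw [sub_eq_add_neg, h1, h2]; ring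

/-- Improved abstract error estimate for saddle point approximations
(Braess, Theorem 4.8): if the discrete saddle point solution `(u_h, λ_h)` (with a discrete
inf-sup condition of constant `β > 0`) additionally satisfies `b(u_h, μ) = 0` for all
`μ ∈ Q` (not just `Q_h`), then the primal error satisfies
`‖u - u_h‖ ≤ (M/α) ‖u - v‖` for every `v ∈ V_h ∩ Ker b`, independently of the multiplier
approximation. -/
theorem stmt19 {V Q : Type*}
    [NormedAddCommGroup V] [InnerProductSpace ℝ V] [CompleteSpace V]
    [NormedAddCommGroup Q] [InnerProductSpace ℝ Q] [CompleteSpace Q]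
    (a : V → V → ℝ) (b : V → Q → ℝ) (α M Mb β : ℝ)
    (hα : 0 < α) (hM : 0 < M) (hβ : 0 < β)
    (ha : IsBilin a) (hb : IsBilin b)
    (hcoer : ∀ v : V, α * ‖v‖ ^ 2 ≤ a v v)
    (habdd : ∀ u v : V, |a u v| ≤ M * ‖u‖ * ‖v‖)
    (hbbdd : ∀ (v : V) (μ : Q), |b v μ| ≤ Mb * ‖v‖ * ‖μ‖)
    (Vh : Submodule ℝ V) (Qh : Submodule ℝ Q)
    [FiniteDimensional ℝ Vh] [FiniteDimensional ℝ Qh]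
    (F : V →L[ℝ] ℝ)
    (u : V) (lam : Q)
    (hc1 : ∀ v : V, a u v + b v lam = F v) (hc2 : ∀ μ : Q, b u μ = 0)
    (uh : V) (lamh : Q) (huh : uh ∈ Vh) (hlamh : lamh ∈ Qh)
    (hd1 : ∀ v ∈ Vh, a uh v + b v lamh = F v)
    (hd2 : ∀ μ ∈ Qh, b uh μ = 0)
    (hinfsup : ∀ μ ∈ Qh, β * ‖μ‖ ≤ sSup {r : ℝ | ∃ v ∈ Vh, v ≠ 0 ∧ r = b v μ / ‖v‖})
    (hker : ∀ μ : Q, b uh μ = 0) :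
    ∀ v ∈ Vh, (∀ μ : Q, b v μ = 0) → ‖u - uh‖ ≤ (M / α) * ‖u - v‖ := by
  intro v hv hvker
  set e := u - uh with he
  -- Galerkin orthogonality on w = uh - v ∈ Vh ∩ Ker b
  set w := uh - v with hw
  have hwVh : w ∈ Vh := Submodule.sub_mem _ huh hv
  have hblam : b w lam = 0 := by
    rw [hw, hb.sub_left, hker, hvker]; ring
  have hblamh : b w lamh = 0 := by
    rw [hw, hb.sub_left, hker, hvker]; ring
  have hau : a u w = F w := by
    have := hc1 w; rw [hblam] at this; linarith
  have hauh : a uh w = F w := by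
    have := hd1 w hwVh; rw [hblamh] at this; linarith
  have horth : a e w = 0 := by
    rw [he, ha.sub_left, hau, hauh]; ring
  have key : α * ‖e‖ ^ 2 ≤ M * ‖e‖ * ‖u - v‖ := by
    have h1 : a e e = a e (u - v) := by
      have : e = (u - v) - w := by rw [he, hw]; abel
      calc a e e = a e ((u - v) - w) := by rw [← this]
        _ = a e (u - v) - a e w := ha.sub_right _ _ _
        _ = a e (u - v) := by rw [horth]; ring
    calc α * ‖e‖ ^ 2 ≤ a e e := hcoer e
      _ = a e (u - v) := h1
      _ ≤ |a e (u - v)| := le_abs_self _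
      _ ≤ M * ‖e‖ * ‖u - v‖ := habdd e (u - v)
  rcases eq_or_ne e 0 with h0 | h0
  · rw [h0, norm_zero]
    positivity
  · have hne : (0:ℝ) < ‖e‖ := norm_pos_iff.mpr h0
    have : α * ‖e‖ ≤ M * ‖u - v‖ := by
      have := key
      nlinarith
    rw [div_mul_eq_mul_div, le_div_iff₀ hα]
    nlinarith
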